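/- arXiv:1710.01623 — 3 statements merged into one kernel-verified Lean document; each statement's English description precedes it below -/
import Mathlib

section
/- Let d₀, d₁, d₂ > 0 and let u = (u₁, u₂) satisfy u₁ > 0, u₂ > 0, u₁ + u₂ < 1. Then the matrix product H(u) A(u) of the Maxwell–Stefan entropy Hessian and diffusion matrix is positive definite: zᵀ H(u) A(u) z > 0 for every nonzero z ∈ ℝ². -/
open Matrix

/-- Maxwell–Stefan diffusion matrix for three components (in terms of the two
independent volume fractions `u1, u2`), including the factor `1 / a(u)`. -/
noncomputable def msA (d0 d1 d2 u1 u2 : ℝ) : Matrix (Fin 2) (Fin 2) ℝ :=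
  (1 / (d1 * d2 * (1 - u1 - u2) + d0 * (d1 * u1 + d2 * u2))) •
    !![d2 + (d0 - d2) * u1, (d0 - d1) * u1;
       (d0 - d2) * u2, d1 + (d0 - d1) * u2]

/-- Hessian of the Maxwell–Stefan entropy density. -/
noncomputable def msH (u1 u2 : ℝ) : Matrix (Fin 2) (Fin 2) ℝ :=
  !![1 / u1 + 1 / (1 - u1 - u2), 1 / (1 - u1 - u2);
     1 / (1 - u1 - u2), 1 / u2 + 1 / (1 - u1 - u2)]

/-! Writing `A = a⁻¹ (diag(d₂, d₁) + u wᵀ)` with `w = (d₀ - d₂, d₀ - d₁)` and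
`H = diag(1/u₁, 1/u₂) + u₃⁻¹ 𝟙𝟙ᵀ`, the rank-one terms of `H A` collapse because
`u₁ + u₂ = 1 - u₃`, leaving `H A = a⁻¹ (diag(d₂/u₁, d₁/u₂) + (d₀/u₃) 𝟙𝟙ᵀ)`:
a positive diagonal matrix plus a positive semidefinite rank-one matrix, scaled by `a⁻¹ > 0`. -/

theorem Matrix.posDef_diagonal_add_smul_vecMulVec {n : Type*} [Fintype n] [DecidableEq n]
    {d : n → ℝ} (hd : ∀ i, 0 < d i) {c : ℝ} (hc : 0 ≤ c) (v : n → ℝ) :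
    (diagonal d + c • vecMulVec v v).PosDef :=
  (PosDef.diagonal hd).add_posSemidef ((posSemidef_vecMulVec_self_star v).smul hc)

theorem msA_denom_pos {d0 d1 d2 u1 u2 : ℝ} (hd0 : 0 ≤ d0) (hd1 : 0 < d1) (hd2 : 0 < d2)
    (hu1 : 0 ≤ u1) (hu2 : 0 ≤ u2) (hu3 : 0 < 1 - u1 - u2) :
    0 < d1 * d2 * (1 - u1 - u2) + d0 * (d1 * u1 + d2 * u2) := by
  positivity

theorem msH_mul_msA {d0 d1 d2 u1 u2 : ℝ} (hu1 : u1 ≠ 0) (hu2 : u2 ≠ 0) (hu3 : 1 - u1 - u2 ≠ 0) :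
    msH u1 u2 * msA d0 d1 d2 u1 u2 =
      (1 / (d1 * d2 * (1 - u1 - u2) + d0 * (d1 * u1 + d2 * u2))) •
        (diagonal ![d2 / u1, d1 / u2] + (d0 / (1 - u1 - u2)) • vecMulVec 1 1) := by
  rw [msA, mul_smul_comm]
  congr 1
  ext i j
  fin_cases i <;> fin_cases j <;>
    simp only [msH, Matrix.mul_apply, Fin.sum_univ_two, Fin.zero_eta, Fin.mk_one, Fin.isValue,
      of_apply, cons_val', cons_val_zero, cons_val_one, cons_val_fin_one, vecMulVec, Pi.one_apply,
      smul_of, Matrix.add_apply, Pi.smul_apply, smul_eq_mul, diagonal_apply_eq, diagonal_apply_ne,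
      ne_eq, zero_ne_one, one_ne_zero, not_false_eq_true] <;> field_simp <;> ring

/-- The product `H(u) A(u)` of the Maxwell–Stefan entropy Hessian and diffusion
matrix is positive definite. -/
theorem maxwellStefan_HA_posDef
    (d0 d1 d2 u1 u2 : ℝ) (hd0 : 0 < d0) (hd1 : 0 < d1) (hd2 : 0 < d2)
    (hu1 : 0 < u1) (hu2 : 0 < u2) (hsum : u1 + u2 < 1) :
    ∀ z : Fin 2 → ℝ, z ≠ 0 →
      0 < z ⬝ᵥ ((msH u1 u2 * msA d0 d1 d2 u1 u2) *ᵥ z) := by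
  intro z hz
  have hu3 : 0 < 1 - u1 - u2 := by linarith
  have hS : (diagonal ![d2 / u1, d1 / u2] + (d0 / (1 - u1 - u2)) • vecMulVec 1 1).PosDef :=
    posDef_diagonal_add_smul_vecMulVec (Fin.forall_fin_two.2 ⟨div_pos hd2 hu1, div_pos hd1 hu2⟩)
      (div_pos hd0 hu3).le 1
  have hHA := hS.smul (one_div_pos.2 (msA_denom_pos hd0.le hd1 hd2 hu1.le hu2.le hu3))
  rw [msH_mul_msA hu1.ne' hu2.ne' hu3.ne']
  simpa only [star_trivial] using hHA.dotProduct_mulVec_pos hz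
end

section
/- Let a₁₀, a₁₁, a₁₂, a₂₀, a₂₁, a₂₂ ≥ 0 and let u₁, u₂ > 0. Then the matrix product H(u) A(u) of the SKT entropy Hessian and diffusion matrix is positive semidefinite: zᵀ H(u) A(u) z ≥ 0 for all z ∈ ℝ². -/
open Matrix

/-- Diffusion matrix of the two-species SKT population model. -/
def sktA (a10 a11 a12 a20 a21 a22 u1 u2 : ℝ) : Matrix (Fin 2) (Fin 2) ℝ :=
  !![a10 + a11 * u1 + a12 * u2, a12 * u1;
     a21 * u2, a20 + a21 * u1 + a22 * u2]

/-- Hessian of the SKT entropy density `h(u) = a21 u1 (log u1 - 1) + a12 u2 (log u2 - 1)`. -/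
noncomputable def sktH (a12 a21 u1 u2 : ℝ) : Matrix (Fin 2) (Fin 2) ℝ :=
  !![a21 / u1, 0; 0, a12 / u2]

variable {a10 a11 a12 a20 a21 a22 u1 u2 : ℝ}

theorem sktH_mul_sktA (hu1 : u1 ≠ 0) (hu2 : u2 ≠ 0) :
    sktH a12 a21 u1 u2 * sktA a10 a11 a12 a20 a21 a22 u1 u2 =
      diagonal ![a21 * (a10 / u1 + a11), a12 * (a20 / u2 + a22)] +
        (a12 * a21 / (u1 * u2)) • vecMulVec ![u2, u1] ![u2, u1] := by
  ext i j
  fin_cases i <;> fin_cases j <;> simp [sktH, sktA, Matrix.mul_apply]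
  all_goals field_simp
  ring

theorem sktH_mul_sktA_posSemidef (h10 : 0 ≤ a10) (h11 : 0 ≤ a11) (h12 : 0 ≤ a12)
    (h20 : 0 ≤ a20) (h21 : 0 ≤ a21) (h22 : 0 ≤ a22) (hu1 : 0 < u1) (hu2 : 0 < u2) :
    (sktH a12 a21 u1 u2 * sktA a10 a11 a12 a20 a21 a22 u1 u2).PosSemidef := by
  rw [sktH_mul_sktA hu1.ne' hu2.ne']
  have hw : (vecMulVec ![u2, u1] ![u2, u1]).PosSemidef := by
    simpa using posSemidef_vecMulVec_self_star ![u2, u1]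
  refine .add (.diagonal ?_) (hw.smul (by positivity))
  intro i
  fin_cases i <;> simp <;> positivity

/-- The product `H(u) A(u)` of the SKT entropy Hessian and diffusion matrix is
positive semidefinite. -/
theorem skt_HA_posSemidef
    (a10 a11 a12 a20 a21 a22 u1 u2 : ℝ)
    (h10 : 0 ≤ a10) (h11 : 0 ≤ a11) (h12 : 0 ≤ a12)
    (h20 : 0 ≤ a20) (h21 : 0 ≤ a21) (h22 : 0 ≤ a22)
    (hu1 : 0 < u1) (hu2 : 0 < u2) :
    ∀ z : Fin 2 → ℝ,
      0 ≤ z ⬝ᵥ ((sktH a12 a21 u1 u2 * sktA a10 a11 a12 a20 a21 a22 u1 u2) *ᵥ z) := by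
  simpa using (sktH_mul_sktA_posSemidef h10 h11 h12 h20 h21 h22 hu1 hu2).dotProduct_mulVec_nonneg
end

section
/- Let a₁₀, a₁₂, a₂₀, a₂₁ ≥ 0 and a₁₁, a₂₂ > 0 with a₁₂, a₂₁ > 0, and set κ = min(a₂₁a₁₁, a₁₂a₂₂) > 0. Then for all u₁, u₂ > 0 and all z = (z₁, z₂) ∈ ℝ²: zᵀ H(u) A(u) z ≥ κ ( z₁² + z₂² ). In particular, in the presence of self-diffusion the two-species SKT model satisfies hypothesis (H2) of the boundedness-by-entropy method with exponent m = 1, and H(u)A(u) is positive definite. -/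
open Matrix

/-!
Completing the square,
`zᵀ H A z = a21 a11 z1² + a12 a22 z2² + a21 a10 z1² / u1 + a12 a20 z2² / u2
  + a12 a21 (u2 z1 + u1 z2)² / (u1 u2)`,
and every term after the first two is nonnegative, while the first two dominate
`min (a21 a11) (a12 a22) |z|²`.
-/

theorem dotProduct_sktH_mul_sktA_mulVec (a10 a11 a12 a20 a21 a22 : ℝ) {u1 u2 : ℝ}
    (hu1 : u1 ≠ 0) (hu2 : u2 ≠ 0) (z : Fin 2 → ℝ) :
    z ⬝ᵥ ((sktH a12 a21 u1 u2 * sktA a10 a11 a12 a20 a21 a22 u1 u2) *ᵥ z)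
      = a21 * a11 * z 0 ^ 2 + a12 * a22 * z 1 ^ 2
        + a21 * a10 / u1 * z 0 ^ 2 + a12 * a20 / u2 * z 1 ^ 2
        + a12 * a21 * (u2 * z 0 + u1 * z 1) ^ 2 / (u1 * u2) := by
  simp only [sktH, sktA, dotProduct, mulVec, mul_apply, Fin.sum_univ_two, of_apply, cons_val',
    cons_val_zero, cons_val_one, empty_val', cons_val_fin_one]
  field_simp
  ring

theorem min_mul_sq_add_sq_le (p q x y : ℝ) :
    min p q * (x ^ 2 + y ^ 2) ≤ p * x ^ 2 + q * y ^ 2 := by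
  rw [mul_add]
  gcongr
  exacts [min_le_left p q, min_le_right p q]

theorem min_mul_sq_add_sq_le_dotProduct_sktH_mul_sktA_mulVec {a10 a12 a20 a21 : ℝ}
    (a11 a22 : ℝ) (h10 : 0 ≤ a10) (h20 : 0 ≤ a20) (h12 : 0 ≤ a12) (h21 : 0 ≤ a21)
    {u1 u2 : ℝ} (hu1 : 0 < u1) (hu2 : 0 < u2) (z : Fin 2 → ℝ) :
    min (a21 * a11) (a12 * a22) * (z 0 ^ 2 + z 1 ^ 2)
      ≤ z ⬝ᵥ ((sktH a12 a21 u1 u2 * sktA a10 a11 a12 a20 a21 a22 u1 u2) *ᵥ z) := by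
  rw [dotProduct_sktH_mul_sktA_mulVec a10 a11 a12 a20 a21 a22 hu1.ne' hu2.ne']
  have := min_mul_sq_add_sq_le (a21 * a11) (a12 * a22) (z 0) (z 1)
  have : 0 ≤ a21 * a10 / u1 * z 0 ^ 2 := by positivity
  have : 0 ≤ a12 * a20 / u2 * z 1 ^ 2 := by positivity
  have : 0 ≤ a12 * a21 * (u2 * z 0 + u1 * z 1) ^ 2 / (u1 * u2) := by positivity
  linarith

theorem sq_add_sq_pos_of_ne_zero {z : Fin 2 → ℝ} (hz : z ≠ 0) : 0 < z 0 ^ 2 + z 1 ^ 2 := by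
  have hself : z ⬝ᵥ z = z 0 ^ 2 + z 1 ^ 2 := by
    simp only [dotProduct, Fin.sum_univ_two, sq]
  rw [← hself]
  exact lt_of_le_of_ne (Finset.sum_nonneg fun i _ => mul_self_nonneg (z i))
    (Ne.symm (dotProduct_self_eq_zero.not.mpr hz))

/-- Hypothesis (H2) with exponent `m = 1` for the two-species SKT model with
self-diffusion: with `κ = min(a21 a11, a12 a22) > 0` one has
`zᵀ H(u) A(u) z ≥ κ (z1² + z2²)`; in particular `H(u) A(u)` is positive definite. -/
theorem skt_H2_one_selfDiffusion
    (a10 a11 a12 a20 a21 a22 : ℝ)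
    (h10 : 0 ≤ a10) (h20 : 0 ≤ a20)
    (h11 : 0 < a11) (h22 : 0 < a22) (h12 : 0 < a12) (h21 : 0 < a21) :
    0 < min (a21 * a11) (a12 * a22) ∧
    (∀ u1 u2 : ℝ, 0 < u1 → 0 < u2 →
      ∀ z : Fin 2 → ℝ,
        min (a21 * a11) (a12 * a22) * ((z 0) ^ 2 + (z 1) ^ 2)
          ≤ z ⬝ᵥ ((sktH a12 a21 u1 u2 * sktA a10 a11 a12 a20 a21 a22 u1 u2) *ᵥ z)) ∧
    (∀ u1 u2 : ℝ, 0 < u1 → 0 < u2 →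
      ∀ z : Fin 2 → ℝ, z ≠ 0 →
        0 < z ⬝ᵥ ((sktH a12 a21 u1 u2 * sktA a10 a11 a12 a20 a21 a22 u1 u2) *ᵥ z)) := by
  have hκ : 0 < min (a21 * a11) (a12 * a22) := lt_min (mul_pos h21 h11) (mul_pos h12 h22)
  have bound := fun u1 u2 (hu1 : 0 < u1) (hu2 : 0 < u2) z =>
    min_mul_sq_add_sq_le_dotProduct_sktH_mul_sktA_mulVec a11 a22 h10 h20 h12.le h21.le hu1 hu2 z
  refine ⟨hκ, bound, fun u1 u2 hu1 hu2 z hz => ?_⟩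
  exact (mul_pos hκ (sq_add_sq_pos_of_ne_zero hz)).trans_le (bound u1 u2 hu1 hu2 z)
end
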